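/- Let ν > 0, h(ξ) = ξ², and let player types be uniformly distributed on [1, 2] in a two-player Tullock contest with equilibrium strategy β(c) = ν/(4c − 2). Then the optimal prize function V*(ξ) = [ β^{-1}(ξ)·h(ξ) − ∫_{ν/6}^{ξ} h(t) d(β^{-1}(t)) ] / p(ξ), where p(ξ) = ∫_1^2 ξ/(ξ + β(c)) dc, has the closed form V*(ξ) = ( ξ²/2 + ν·ξ/2 − ν²/24 ) / ( 1 − (ν/(4ξ))·log( (6ξ + ν)/(2ξ + ν) ) ) for every ξ ∈ [ν/6, ν/2]. -/

import Mathlib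

/-! The numerator collapses because `t² · (β⁻¹)'(t) = -ν/4` is constant, so its integral is
linear in `ξ`. In the winning probability the integrand is `1 - ν / (4ξc - 2ξ + ν)`, whose
antiderivative `c - (ν / 4ξ) log (4ξc - 2ξ + ν)` produces the logarithm. -/

open Real Set

lemma deriv_div_mul_add_const (a k b : ℝ) {t : ℝ} (hk : k ≠ 0) (ht : t ≠ 0) :
    deriv (fun s : ℝ => a / (k * s) + b) t = -a / (k * t ^ 2) := by
  have hlin : HasDerivAt (fun s : ℝ => k * s) k t := by
    simpa using (hasDerivAt_id t).const_mul k
  have hd : HasDerivAt (fun s : ℝ => a / (k * s) + b) _ t :=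
    ((hasDerivAt_const t a).div hlin (mul_ne_zero hk ht)).add_const b
  rw [hd.deriv]
  field_simp
  ring

lemma integral_sq_mul_deriv_inv_contribution (ν : ℝ) {a b : ℝ} (ha : 0 < a) (hb : 0 < b) :
    ∫ t in a..b, t ^ 2 * deriv (fun s : ℝ => ν / (4 * s) + 1 / 2) t = -ν / 4 * (b - a) := by
  have hconst : EqOn (fun t => t ^ 2 * deriv (fun s : ℝ => ν / (4 * s) + 1 / 2) t)
      (fun _ => -ν / 4) (uIcc a b) := by
    intro t ht
    have ht0 : t ≠ 0 := (lt_of_lt_of_le (lt_min ha hb) ht.1).ne'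
    dsimp only
    rw [deriv_div_mul_add_const ν 4 (1 / 2) four_ne_zero ht0]
    field_simp
  rw [intervalIntegral.integral_congr hconst, intervalIntegral.integral_const, smul_eq_mul]
  ring

section WinningProbability

variable {ξ ν : ℝ}

lemma winProb_denom_pos (hξ : 0 < ξ) (hν : 0 < 2 * ξ + ν) {c : ℝ} (hc : c ∈ Icc (1 : ℝ) 2) :
    0 < 4 * ξ * c - 2 * ξ + ν := by
  nlinarith [hc.1]

lemma winProb_integrand_eq (hξ : 0 < ξ) (hν : 0 < 2 * ξ + ν) {c : ℝ} (hc : c ∈ Icc (1 : ℝ) 2) :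
    ξ / (ξ + ν / (4 * c - 2)) = 1 - ν / (4 * ξ * c - 2 * ξ + ν) := by
  have hc2 : 4 * c - 2 ≠ 0 := by linarith [hc.1]
  have hlin := (winProb_denom_pos hξ hν hc).ne'
  rw [add_div' _ _ _ hc2, div_div_eq_mul_div,
    show ξ * (4 * c - 2) + ν = 4 * ξ * c - 2 * ξ + ν by ring, eq_sub_iff_add_eq, ← add_div, div_eq_one_iff_eq hlin]
  ring

lemma hasDerivAt_winProb_antideriv (hξ : 0 < ξ) (hν : 0 < 2 * ξ + ν) {c : ℝ}
    (hc : c ∈ Icc (1 : ℝ) 2) :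
    HasDerivAt (fun c => c - ν / (4 * ξ) * log (4 * ξ * c - 2 * ξ + ν))
      (1 - ν / (4 * ξ * c - 2 * ξ + ν)) c := by
  have hlin := winProb_denom_pos hξ hν hc
  have hl : HasDerivAt (fun c => 4 * ξ * c - 2 * ξ + ν) (4 * ξ) c := by
    simpa using (((hasDerivAt_id c).const_mul (4 * ξ)).sub_const (2 * ξ)).add_const ν
  refine ((hasDerivAt_id c).sub (((hasDerivAt_log hlin.ne').comp c hl).const_mul
    (ν / (4 * ξ)))).congr_deriv ?_
  field_simp

lemma integral_winProb (hξ : 0 < ξ) (hν : 0 < 2 * ξ + ν) :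
    ∫ c in (1 : ℝ)..2, ξ / (ξ + ν / (4 * c - 2))
      = 1 - ν / (4 * ξ) * log ((6 * ξ + ν) / (2 * ξ + ν)) := by
  have h12 : uIcc (1 : ℝ) 2 = Icc 1 2 := uIcc_of_le (by norm_num)
  have hcont : ContinuousOn (fun c => 1 - ν / (4 * ξ * c - 2 * ξ + ν)) (uIcc 1 2) := by
    rw [h12]
    exact continuousOn_const.sub (continuousOn_const.div (by fun_prop)
      fun c hc => (winProb_denom_pos hξ hν hc).ne')
  rw [intervalIntegral.integral_congr (g := fun c => 1 - ν / (4 * ξ * c - 2 * ξ + ν))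
      (h12 ▸ fun c hc => winProb_integrand_eq hξ hν hc),
    intervalIntegral.integral_eq_sub_of_hasDerivAt
      (h12 ▸ fun c hc => hasDerivAt_winProb_antideriv hξ hν hc) hcont.intervalIntegrable,
    log_div (by linarith) hν.ne']
  ring_nf

end WinningProbability

/-- the closed form of the optimal prize function in the two-player case
study with `h ξ = ξ²`, types uniform on `[1, 2]`, equilibrium strategy
`β c = ν / (4 c - 2)` and inverse `β⁻¹ ξ = ν / (4 ξ) + 1 / 2`:
`V* ξ = (ξ²/2 + νξ/2 - ν²/24) / (1 - (ν/(4ξ)) log ((6ξ + ν)/(2ξ + ν)))`. -/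
theorem tullock_case_study_optimal_prize (ν : ℝ) (hν : 0 < ν) :
    ∀ ξ ∈ Set.Icc (ν / 6) (ν / 2),
      ((ν / (4 * ξ) + 1 / 2) * ξ ^ 2
          - ∫ t in (ν / 6)..ξ, t ^ 2 * deriv (fun s : ℝ => ν / (4 * s) + 1 / 2) t)
        / (∫ c in (1 : ℝ)..2, ξ / (ξ + ν / (4 * c - 2)))
      = (ξ ^ 2 / 2 + ν * ξ / 2 - ν ^ 2 / 24)
        / (1 - ν / (4 * ξ) * Real.log ((6 * ξ + ν) / (2 * ξ + ν))) := by
  rintro ξ ⟨hlow, -⟩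
  have hν6 : 0 < ν / 6 := by positivity
  have hξ : 0 < ξ := hν6.trans_le hlow
  rw [integral_sq_mul_deriv_inv_contribution ν hν6 hξ, integral_winProb hξ (by linarith)]
  congr 1
  field_simp
  ring
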